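/- Sequential consistency is not composable: there exist a history H = (O, <_p) over the disjoint union of the alphabets of two register objects X and Y such that the sub-history of H on the operations of X is sequentially consistent with respect to the register specification, the sub-history of H on the operations of Y is sequentially consistent with respect to the register specification, but H is not sequentially consistent with respect to the composition of the two register specifications. Concretely, one may take O = {o₁ = X.write(1), o₂ = Y.read(0), o₃ = Y.write(1), o₄ = X.read(0)} with process order o₁ <_p o₂ (performed by process p) and o₃ <_p o₄ (performed by process q), and no other <_p relations. -/
import Mathlib


/-!
STATEMENT 5: Sequential consistency is not composable. The witnessing history
has four operations on two registers `X` (first component `false`) and `Y`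
(first component `true`):
`o₁ = X.write(1)`, `o₂ = Y.read(0)`, `o₃ = Y.write(1)`, `o₄ = X.read(0)`,
with process order `o₁ <_p o₂` and `o₃ <_p o₄`.
-/

/-- Operations on a single register. -/
inductive RegOp : Type
  | write (v : ℕ) : RegOp
  | read (v : ℕ) : RegOp
deriving DecidableEq

/-- `regRun cur w` holds iff `w` is a correct register behaviour starting from
current value `cur`: every read returns the last value written, or `cur`. -/
def regRun : ℕ → List RegOp → Prop
  | _, [] => True
  | _, RegOp.write v :: l => regRun v l
  | cur, RegOp.read v :: l => v = cur ∧ regRun cur l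

/-- The register sequential specification (initial value 0). -/
def RegSpec : Set (List RegOp) := {w | regRun 0 w}

/-- The (sub-)history with operations `S ⊆ O`, process order `p` and labelling
`lab` is sequentially consistent with respect to the sequential specification
`T`: some enumeration `l` of `S` respecting `p` yields a word of `T`. -/
def SeqConsList {O L : Type} (S : Set O) (p : O → O → Prop) (lab : O → L)
    (T : Set (List L)) : Prop :=
  ∃ l : List O, l.Nodup ∧ (∀ o, o ∈ l ↔ o ∈ S) ∧
    (∀ a b, a ∈ S → b ∈ S → p a b → List.Sublist [a, b] l) ∧
    l.map lab ∈ T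

/-- The four operations: `o₁ = 0`, `o₂ = 1`, `o₃ = 2`, `o₄ = 3`, labelled by
the register (`false` = X, `true` = Y) and the register operation. -/
def lab5 : Fin 4 → Bool × RegOp :=
  ![(false, RegOp.write 1), (true, RegOp.read 0),
    (true, RegOp.write 1), (false, RegOp.read 0)]

/-- Process order: `o₁ <_p o₂` (process p) and `o₃ <_p o₄` (process q). -/
def procOrder5 : Fin 4 → Fin 4 → Prop :=
  fun a b => (a = 0 ∧ b = 1) ∨ (a = 2 ∧ b = 3)

/-- Subword of the letters of register `b`, viewed as a word over `RegOp`. -/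
def projReg (b : Bool) (w : List (Bool × RegOp)) : List RegOp :=
  (w.filter (fun x => x.1 == b)).map Prod.snd

/-- Composition of the two register specifications: words whose `X`-subword
and `Y`-subword are both correct register behaviours. -/
def CompSpec : Set (List (Bool × RegOp)) :=
  {w | projReg false w ∈ RegSpec ∧ projReg true w ∈ RegSpec}

instance regRun.dec : ∀ (c : ℕ) (l : List RegOp), Decidable (regRun c l)
  | _, [] => .isTrue trivial
  | _, .write v :: l => regRun.dec v l
  | c, .read v :: l =>
      @instDecidableAnd _ _ (Nat.decEq v c) (regRun.dec c l)

instance : DecidablePred (· ∈ RegSpec) := fun w => regRun.dec 0 w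

instance : DecidablePred (· ∈ CompSpec) := fun _ => instDecidableAnd

/-- Sequential consistency is not composable: in the above history each
register is sequentially consistent, but the whole history is not
sequentially consistent with respect to the composition. -/
theorem seqConsistency_not_composable :
    SeqConsList {o : Fin 4 | (lab5 o).1 = false} procOrder5
      (fun o => (lab5 o).2) RegSpec ∧
    SeqConsList {o : Fin 4 | (lab5 o).1 = true} procOrder5
      (fun o => (lab5 o).2) RegSpec ∧
    ¬ SeqConsList Set.univ procOrder5 lab5 CompSpec := by
  refine ⟨⟨[3, 0], by decide, by decide, ?_, by decide⟩,
         ⟨[1, 2], by decide, by decide, ?_, by decide⟩, ?_⟩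
  · rintro a b ha hb (⟨rfl, rfl⟩ | ⟨rfl, rfl⟩) <;> simp [lab5] at ha hb
  · rintro a b ha hb (⟨rfl, rfl⟩ | ⟨rfl, rfl⟩) <;> simp [lab5] at ha hb
  · rintro ⟨l, hnd, hmem, hsub, hspec⟩
    have hperm : l.Perm (List.finRange 4) :=
      (List.perm_ext_iff_of_nodup hnd (List.nodup_finRange 4)).2
        (fun a => by simp [hmem a])
    have hlen : l.length = 4 := by simpa using hperm.length_eq
    have key : ∀ a b c d : Fin 4,
        ¬(List.Sublist [(0 : Fin 4), 1] [a, b, c, d] ∧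
          List.Sublist [(2 : Fin 4), 3] [a, b, c, d] ∧
          List.map lab5 [a, b, c, d] ∈ CompSpec) := by decide
    match l, hlen with
    | [a, b, c, d], _ =>
      exact key a b c d ⟨hsub 0 1 trivial trivial (Or.inl ⟨rfl, rfl⟩),
        hsub 2 3 trivial trivial (Or.inr ⟨rfl, rfl⟩), hspec⟩
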